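/- arXiv:1009.1641 — 2 statements merged into one kernel-verified Lean document; each statement's English description precedes it below -/
import Mathlib

section
/- Let μ be a probability measure on the unit circle with infinite support, (Φ_n) its monic orthogonal polynomials, φ_n = Φ_n/‖Φ_n‖_μ its orthonormal polynomials, and α_n = -conj(Φ_{n+1}(0)) its Verblunsky coefficients, with the convention α_{-1} = -1. Fix 0 < γ < 1 and ζ = e^{iω} on the unit circle, and let ν = (1-γ)μ + γδ_ω. Then α_n(dν) = α_n − q_n^{-1} γ conj(φ_{n+1}(ζ)) · Σ_{j=0}^{n} α_{j-1} (‖Φ_{n+1}‖_μ/‖Φ_j‖_μ) φ_j(ζ), where K_n(ζ) = Σ_{j=0}^{n} |φ_j(ζ)|² and q_n = (1-γ) + γK_n(ζ). -/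
/-!
Let `K_n(z, ζ) = ∑_{j ≤ n} conj (φ_j ζ) φ_j z` be the reproducing kernel of the polynomials of
degree `≤ n` in `L²(μ)`, so that `⟨Φ_k, K_n(·, ζ)⟩_μ = conj (Φ_k ζ)` for `k ≤ n`. Since
`⟨f, g⟩_ν = (1 - γ) ⟨f, g⟩_μ + γ conj (f ζ) g ζ`, the monic polynomial
`P = Φ_{n+1} - (γ Φ_{n+1}(ζ) / q_n) K_n(·, ζ)` satisfies
`⟨Φ_k, P⟩_ν = conj (Φ_k ζ) (γ Φ_{n+1}(ζ) - (γ Φ_{n+1}(ζ) / q_n) q_n) = 0` for `k ≤ n`, because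
`K_n(ζ, ζ) = K_n(ζ)`. The measure `ν` still has infinite support, so its monic orthogonal
polynomials are unique and `Φ_{n+1}(·, dν) = P`. Evaluating at `0` and using
`conj (φ_j 0) = -α_{j-1} / ‖Φ_j‖_μ` gives the formula.
-/

open MeasureTheory Polynomial Finset

noncomputable section

/-- The `L²(μ)` inner product `⟨f,g⟩_μ = ∫ conj (f z) * g z dμ(z)`. -/
def mInner (μ : Measure ℂ) (f g : ℂ → ℂ) : ℂ :=
  ∫ z, (starRingEnd ℂ) (f z) * g z ∂μ

/-- The `L²(μ)` norm `‖f‖_μ = (∫ |f z|² dμ(z))^{1/2}`. -/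
def mNorm (μ : Measure ℂ) (f : ℂ → ℂ) : ℝ :=
  Real.sqrt (∫ z, ‖f z‖ ^ 2 ∂μ)

/-- `Φ` is the family of monic orthogonal polynomials for `μ`:
`Φ n` is monic of degree `n`, and distinct `Φ`'s are orthogonal in `L²(μ)`. -/
def IsMonicOPS (μ : Measure ℂ) (Φ : ℕ → Polynomial ℂ) : Prop :=
  (∀ n, (Φ n).Monic ∧ (Φ n).natDegree = n) ∧
    ∀ m n, m ≠ n →
      mInner μ (fun z => (Φ m).eval z) (fun z => (Φ n).eval z) = 0

/-- `μ` is a measure on the unit circle `∂𝔻 = {z : ℂ | |z| = 1}`. -/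
def OnCircle (μ : Measure ℂ) : Prop := μ {z : ℂ | ‖z‖ = 1}ᶜ = 0

/-- The (closed) support of `μ` is an infinite set: every closed set of
full measure is infinite. -/
def InfiniteSupport (μ : Measure ℂ) : Prop :=
  ∀ t : Set ℂ, IsClosed t → μ tᶜ = 0 → t.Infinite

namespace OnCircle

variable {ρ ρ' : Measure ℂ}

theorem ae_norm_eq_one (hρ : OnCircle ρ) : ∀ᵐ z ∂ρ, ‖z‖ = 1 :=
  measure_eq_zero_iff_ae_notMem.mp hρ |>.mono fun _ hz => by simpa using hz

theorem add (hρ : OnCircle ρ) (hρ' : OnCircle ρ') : OnCircle (ρ + ρ') := by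
  rw [OnCircle, Measure.add_apply, hρ, hρ', add_zero]

theorem smul (c : ENNReal) (hρ : OnCircle ρ) : OnCircle (c • ρ) := by
  rw [OnCircle, Measure.smul_apply, hρ, smul_zero]

theorem dirac {ζ : ℂ} (hζ : ‖ζ‖ = 1) : OnCircle (Measure.dirac ζ) := by
  have hmeas : MeasurableSet {z : ℂ | ‖z‖ = 1} :=
    (isClosed_eq continuous_norm continuous_const).measurableSet
  rw [OnCircle, Measure.dirac_apply' _ hmeas.compl, Set.indicator_of_notMem (by simpa using hζ)]

theorem integrable_of_continuous {E : Type*} [NormedAddCommGroup E] [IsFiniteMeasure ρ]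
    (hρ : OnCircle ρ) {f : ℂ → E} (hf : Continuous f) : Integrable f ρ := by
  obtain ⟨C, hC⟩ := (isCompact_sphere (0 : ℂ) 1).exists_bound_of_continuousOn hf.continuousOn
  refine Integrable.mono' (integrable_const C) hf.aestronglyMeasurable ?_
  filter_upwards [hρ.ae_norm_eq_one] with z hz
  exact hC z (by simpa using hz)

theorem integrable_conj_eval_mul_eval [IsFiniteMeasure ρ] (hρ : OnCircle ρ) (P Q : ℂ[X]) :
    Integrable (fun z => starRingEnd ℂ (P.eval z) * Q.eval z) ρ :=
  hρ.integrable_of_continuous ((Complex.continuous_conj.comp P.continuous).mul Q.continuous)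

end OnCircle

theorem integral_norm_eval_sq_nonneg (ρ : Measure ℂ) (P : ℂ[X]) : 0 ≤ ∫ z, ‖P.eval z‖ ^ 2 ∂ρ :=
  integral_nonneg fun _ => by positivity

section PolyInner

variable {ρ : Measure ℂ} [IsFiniteMeasure ρ]

def polyInner (hρ : OnCircle ρ) : ℂ[X] →ₗ⋆[ℂ] ℂ[X] →ₗ[ℂ] ℂ :=
  LinearMap.mk₂'ₛₗ (starRingEnd ℂ) (RingHom.id ℂ)
    (fun P Q => mInner ρ (fun z => P.eval z) (fun z => Q.eval z))
    (fun P P' Q => by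
      simp only [mInner, eval_add, map_add, add_mul]
      exact integral_add (hρ.integrable_conj_eval_mul_eval P Q)
        (hρ.integrable_conj_eval_mul_eval P' Q))
    (fun c P Q => by
      simp only [mInner, eval_smul, smul_eq_mul, map_mul, mul_assoc]
      exact integral_const_mul _ _)
    (fun P Q Q' => by
      simp only [mInner, eval_add, mul_add]
      exact integral_add (hρ.integrable_conj_eval_mul_eval P Q)
        (hρ.integrable_conj_eval_mul_eval P Q'))
    (fun c P Q => by
      simp only [mInner, eval_smul, smul_eq_mul, RingHom.id_apply, mul_left_comm _ c]
      exact integral_const_mul _ _)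

theorem polyInner_apply (hρ : OnCircle ρ) (P Q : ℂ[X]) :
    polyInner hρ P Q = mInner ρ (fun z => P.eval z) (fun z => Q.eval z) := rfl

theorem polyInner_self (hρ : OnCircle ρ) (P : ℂ[X]) :
    polyInner hρ P P = ((mNorm ρ fun z => P.eval z) ^ 2 : ℝ) := by
  rw [polyInner_apply, mInner, mNorm, Real.sq_sqrt (integral_norm_eval_sq_nonneg ρ P),
    ← integral_complex_ofReal]
  refine integral_congr_ae (Filter.Eventually.of_forall fun z => ?_)
  simp [Complex.conj_mul']

theorem eq_zero_of_integral_norm_eval_sq_eq_zero (hρ : OnCircle ρ) (hs : InfiniteSupport ρ)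
    {P : ℂ[X]} (h : ∫ z, ‖P.eval z‖ ^ 2 ∂ρ = 0) : P = 0 := by
  have hae := (integral_eq_zero_iff_of_nonneg (fun _ => sq_nonneg _)
    (hρ.integrable_of_continuous (P.continuous.norm.pow 2))).mp h
  refine P.eq_zero_of_infinite_isRoot (hs _ (isClosed_eq P.continuous continuous_const) ?_)
  exact measure_mono_null (fun z hz => by simpa using hz) (ae_iff.mp hae)

theorem mNorm_eval_pos (hρ : OnCircle ρ) (hs : InfiniteSupport ρ) {P : ℂ[X]} (hP : P ≠ 0) :
    0 < mNorm ρ fun z => P.eval z :=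
  Real.sqrt_pos.mpr <| (integral_norm_eval_sq_nonneg ρ P).lt_of_ne' fun h =>
    hP (eq_zero_of_integral_norm_eval_sq_eq_zero hρ hs h)

theorem eq_zero_of_polyInner_self_eq_zero (hρ : OnCircle ρ) (hs : InfiniteSupport ρ) {P : ℂ[X]}
    (h : polyInner hρ P P = 0) : P = 0 := by
  by_contra hP
  have := mNorm_eval_pos hρ hs hP
  rw [polyInner_self] at h
  exact this.ne' (pow_eq_zero_iff two_ne_zero |>.mp (by exact_mod_cast h))

end PolyInner

theorem Polynomial.Monic.sub_of_mem_degreeLT {R : Type*} [Ring R] [Nontrivial R] {P Q : R[X]}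
    {m : ℕ} (hP : P.Monic) (hPd : P.natDegree = m) (hQ : Q ∈ degreeLT R m) :
    (P - Q).Monic ∧ (P - Q).natDegree = m := by
  have hPd' : P.degree = m := by rw [degree_eq_natDegree hP.ne_zero, hPd]
  have hQP : Q.degree < P.degree := hPd' ▸ mem_degreeLT.mp hQ
  exact ⟨hP.sub_of_left hQP,
    natDegree_eq_of_degree_eq_some ((degree_sub_eq_left_of_degree_lt hQP).trans hPd')⟩

section Orthogonality

variable {ρ : Measure ℂ} [IsFiniteMeasure ρ] {F : ℕ → ℂ[X]}

theorem span_image_Iio_eq_degreeLT (hF : ∀ k, (F k).Monic ∧ (F k).natDegree = k) (m : ℕ) :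
    Submodule.span ℂ (F '' Set.Iio m) = degreeLT ℂ m :=
  Sequence.span_degreeLT ⟨F, fun k => by rw [degree_eq_natDegree (hF k).1.ne_zero, (hF k).2]⟩
    fun k _ => by simp [(hF k).1.leadingCoeff]

theorem polyInner_eq_zero_of_mem_degreeLT (hρ : OnCircle ρ)
    (hF : ∀ k, (F k).Monic ∧ (F k).natDegree = k) {m : ℕ} {P : ℂ[X]}
    (hP : ∀ k < m, polyInner hρ (F k) P = 0) {Q : ℂ[X]} (hQ : Q ∈ degreeLT ℂ m) :
    polyInner hρ Q P = 0 := by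
  rw [← span_image_Iio_eq_degreeLT hF] at hQ
  refine (Submodule.span_le (p := LinearMap.ker ((polyInner hρ).flip P))).mpr ?_ hQ
  rintro _ ⟨k, hk, rfl⟩
  rw [SetLike.mem_coe, LinearMap.mem_ker, LinearMap.flip_apply]
  exact hP k hk

theorem IsMonicOPS.polyInner_eq_zero (hρ : OnCircle ρ) {Φ : ℕ → ℂ[X]} (hΦ : IsMonicOPS ρ Φ)
    {m n : ℕ} (h : m ≠ n) : polyInner hρ (Φ m) (Φ n) = 0 :=
  hΦ.2 m n h

theorem IsMonicOPS.eq_of_forall_polyInner_eq_zero (hρ : OnCircle ρ) (hs : InfiniteSupport ρ)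
    {Φ : ℕ → ℂ[X]} (hΦ : IsMonicOPS ρ Φ) {m : ℕ} {P : ℂ[X]} (hPm : P.Monic)
    (hPd : P.natDegree = m) (hP : ∀ Q ∈ degreeLT ℂ m, polyInner hρ Q P = 0) : Φ m = P := by
  obtain ⟨hΦm, hΦd⟩ := hΦ.1 m
  have hΦd' : (Φ m).degree = m := by rw [degree_eq_natDegree hΦm.ne_zero, hΦd]
  have hD : Φ m - P ∈ degreeLT ℂ m := mem_degreeLT.mpr <| hΦd' ▸
    degree_sub_lt_left (by rw [hΦd', degree_eq_natDegree hPm.ne_zero, hPd]) hΦm.ne_zero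
      (by rw [hΦm.leadingCoeff, hPm.leadingCoeff])
  have hΦ_orth : polyInner hρ (Φ m - P) (Φ m) = 0 :=
    polyInner_eq_zero_of_mem_degreeLT hρ hΦ.1 (fun k hk => hΦ.polyInner_eq_zero hρ hk.ne) hD
  refine sub_eq_zero.mp (eq_zero_of_polyInner_self_eq_zero hρ hs ?_)
  rw [map_sub (polyInner hρ (Φ m - P)), hΦ_orth, hP _ hD, sub_zero]

end Orthogonality

section PointMass

def addPointMass (μ : Measure ℂ) (γ : ℝ) (ζ : ℂ) : Measure ℂ :=
  ENNReal.ofReal (1 - γ) • μ + ENNReal.ofReal γ • Measure.dirac ζ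

variable {μ : Measure ℂ} {γ : ℝ} {ζ : ℂ}

instance [IsFiniteMeasure μ] : IsFiniteMeasure (addPointMass μ γ ζ) := by
  have := μ.smul_finite (ENNReal.ofReal_ne_top (r := 1 - γ))
  have := (Measure.dirac ζ).smul_finite (ENNReal.ofReal_ne_top (r := γ))
  unfold addPointMass
  infer_instance

theorem OnCircle.addPointMass (hμ : OnCircle μ) (hζ : ‖ζ‖ = 1) :
    OnCircle (addPointMass μ γ ζ) :=
  (hμ.smul _).add ((OnCircle.dirac hζ).smul _)

theorem InfiniteSupport.addPointMass (hs : InfiniteSupport μ) (hγ : γ < 1) :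
    InfiniteSupport (addPointMass μ γ ζ) := fun t ht h0 =>
  hs t ht <| (Measure.absolutelyContinuous_smul (by simpa using hγ)).add_right _ h0

theorem polyInner_addPointMass [IsFiniteMeasure μ] (hμ : OnCircle μ) (hζ : ‖ζ‖ = 1)
    (hγ0 : 0 ≤ γ) (hγ1 : γ ≤ 1) (P Q : ℂ[X]) :
    polyInner (hμ.addPointMass (γ := γ) hζ) P Q
      = (1 - γ) * polyInner hμ P Q + γ * (starRingEnd ℂ (P.eval ζ) * Q.eval ζ) := by
  rw [polyInner_apply, polyInner_apply, mInner, addPointMass,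
    integral_add_measure ((hμ.integrable_conj_eval_mul_eval P Q).smul_measure ENNReal.ofReal_ne_top)
      (((OnCircle.dirac hζ).integrable_conj_eval_mul_eval P Q).smul_measure ENNReal.ofReal_ne_top),
    integral_smul_measure, integral_smul_measure, integral_dirac,
    ENNReal.toReal_ofReal (by linarith), ENNReal.toReal_ofReal hγ0, Complex.real_smul,
    Complex.real_smul, Complex.ofReal_sub, Complex.ofReal_one]
  rfl

end PointMass

section Kernel

def reproducingKernel (μ : Measure ℂ) (Φ : ℕ → ℂ[X]) (n : ℕ) (ζ : ℂ) : ℂ[X] :=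
  ∑ j ∈ range (n + 1),
    (starRingEnd ℂ ((Φ j).eval ζ) / ((mNorm μ fun z => (Φ j).eval z : ℝ) : ℂ) ^ 2) • Φ j

variable {μ : Measure ℂ} {Φ : ℕ → ℂ[X]}

theorem reproducingKernel_mem_degreeLT (hΦ : ∀ k, (Φ k).Monic ∧ (Φ k).natDegree = k)
    (n : ℕ) (ζ : ℂ) : reproducingKernel μ Φ n ζ ∈ degreeLT ℂ (n + 1) := by
  refine Submodule.sum_mem _ fun j hj => Submodule.smul_mem _ _ (mem_degreeLT.mpr ?_)
  rw [degree_eq_natDegree (hΦ j).1.ne_zero, (hΦ j).2, Nat.cast_lt]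
  exact mem_range.mp hj

theorem eval_reproducingKernel {φ : ℕ → ℂ → ℂ}
    (hφ : ∀ j z, φ j z = (Φ j).eval z / ((mNorm μ fun w => (Φ j).eval w : ℝ) : ℂ))
    (n : ℕ) (ζ z : ℂ) :
    (reproducingKernel μ Φ n ζ).eval z = ∑ j ∈ range (n + 1), starRingEnd ℂ (φ j ζ) * φ j z := by
  rw [reproducingKernel, eval_finsetSum]
  refine sum_congr rfl fun j _ => ?_
  rw [eval_smul, smul_eq_mul, hφ, hφ, map_div₀, Complex.conj_ofReal]
  ring

theorem IsMonicOPS.polyInner_reproducingKernel [IsFiniteMeasure μ] (hμ : OnCircle μ)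
    (hs : InfiniteSupport μ) (hΦ : IsMonicOPS μ Φ) {k n : ℕ} (hk : k ≤ n) (ζ : ℂ) :
    polyInner hμ (Φ k) (reproducingKernel μ Φ n ζ) = starRingEnd ℂ ((Φ k).eval ζ) := by
  have hN : ((mNorm μ fun z => (Φ k).eval z : ℝ) : ℂ) ≠ 0 := by
    exact_mod_cast (mNorm_eval_pos hμ hs (hΦ.1 k).1.ne_zero).ne'
  rw [reproducingKernel, map_sum, sum_eq_single_of_mem k (mem_range.mpr (Nat.lt_succ_of_le hk))
    fun j _ hjk => by rw [map_smul, hΦ.polyInner_eq_zero hμ hjk.symm, smul_zero],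
    map_smul, polyInner_self, smul_eq_mul, Complex.ofReal_pow, div_mul_cancel₀ _ (pow_ne_zero 2 hN)]

end Kernel

theorem IsMonicOPS.addPointMass_eq {μ : Measure ℂ} [IsFiniteMeasure μ] (hμ : OnCircle μ)
    (hs : InfiniteSupport μ) {Φ : ℕ → ℂ[X]} (hΦ : IsMonicOPS μ Φ) {γ : ℝ} (hγ0 : 0 ≤ γ)
    (hγ1 : γ < 1) {ζ : ℂ} (hζ : ‖ζ‖ = 1) {Ψ : ℕ → ℂ[X]} (hΨ : IsMonicOPS (addPointMass μ γ ζ) Ψ)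
    (n : ℕ) (hq : (1 - γ) + γ * (reproducingKernel μ Φ n ζ).eval ζ ≠ 0) :
    Ψ (n + 1) = Φ (n + 1) - (γ * (Φ (n + 1)).eval ζ
      / ((1 - γ) + γ * (reproducingKernel μ Φ n ζ).eval ζ)) • reproducingKernel μ Φ n ζ := by
  obtain ⟨hPm, hPd⟩ := (hΦ.1 (n + 1)).1.sub_of_mem_degreeLT (hΦ.1 (n + 1)).2
    (Submodule.smul_mem _ _ (reproducingKernel_mem_degreeLT hΦ.1 n ζ))
  refine hΨ.eq_of_forall_polyInner_eq_zero (hμ.addPointMass hζ) (hs.addPointMass hγ1) hPm hPd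
    fun Q hQ => polyInner_eq_zero_of_mem_degreeLT _ hΦ.1 (fun k hk => ?_) hQ
  rw [polyInner_addPointMass hμ hζ hγ0 hγ1.le, map_sub, map_smul, hΦ.polyInner_eq_zero hμ hk.ne,
    hΦ.polyInner_reproducingKernel hμ hs (Nat.le_of_lt_succ hk), eval_sub, eval_smul,
    smul_eq_mul, smul_eq_mul]
  field_simp
  ring

/-- **Simon's formula (Theorem 10.13.7 ingredient).** With the convention `α_{-1} = -1`,
`α_n(dν) = α_n - q_n⁻¹ γ conj(φ_{n+1}(ζ)) Σ_{j=0}^n α_{j-1} (‖Φ_{n+1}‖/‖Φ_j‖) φ_j(ζ)`. -/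
theorem verblunsky_insert_point_mass_simon
    (μ : Measure ℂ) [IsProbabilityMeasure μ] (hcirc : OnCircle μ)
    (hsupp : InfiniteSupport μ)
    (Φ : ℕ → Polynomial ℂ) (hΦ : IsMonicOPS μ Φ)
    (φ : ℕ → ℂ → ℂ)
    (hφ : ∀ n z, φ n z = (Φ n).eval z / (mNorm μ (fun w => (Φ n).eval w) : ℂ))
    (α : ℕ → ℂ) (hα : ∀ n, α n = -(starRingEnd ℂ) ((Φ (n + 1)).eval 0))
    -- `αm j` is `α_{j-1}`, with the convention `α_{-1} = -1`
    (αm : ℕ → ℂ) (hαm0 : αm 0 = -1) (hαm : ∀ j, αm (j + 1) = α j)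
    (γ : ℝ) (hγ0 : 0 < γ) (hγ1 : γ < 1)
    (ω : ℝ) (ζ : ℂ) (hζ : ζ = Complex.exp (ω * Complex.I))
    (ν : Measure ℂ)
    (hν : ν = ENNReal.ofReal (1 - γ) • μ + ENNReal.ofReal γ • Measure.dirac ζ)
    (Ψ : ℕ → Polynomial ℂ) (hΨ : IsMonicOPS ν Ψ)
    (αν : ℕ → ℂ) (hαν : ∀ n, αν n = -(starRingEnd ℂ) ((Ψ (n + 1)).eval 0))
    (K : ℕ → ℝ) (hK : ∀ n, K n = ∑ j ∈ Finset.range (n + 1), ‖φ j ζ‖ ^ 2)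
    (q : ℕ → ℝ) (hq : ∀ n, q n = (1 - γ) + γ * K n)
    (n : ℕ) :
    αν n = α n - ((q n : ℝ) : ℂ)⁻¹ * (γ : ℂ) * (starRingEnd ℂ) (φ (n + 1) ζ) *
        ∑ j ∈ Finset.range (n + 1), αm j *
          ((mNorm μ (fun w => (Φ (n + 1)).eval w) / mNorm μ (fun w => (Φ j).eval w) : ℝ) : ℂ) *
          φ j ζ := by
  subst hν
  have hζ1 : ‖ζ‖ = 1 := by rw [hζ, Complex.norm_exp_ofReal_mul_I]
  have hkernel := eval_reproducingKernel hφ n ζ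
  have hΦζ : (Φ (n + 1)).eval ζ = (mNorm μ fun w => (Φ (n + 1)).eval w : ℝ) * φ (n + 1) ζ := by
    rw [hφ, mul_div_cancel₀ _ (by exact_mod_cast (mNorm_eval_pos hcirc hsupp
      (hΦ.1 (n + 1)).1.ne_zero).ne')]
  have hΦ0 : ∀ j, starRingEnd ℂ ((Φ j).eval 0) = -αm j := by
    rintro (_ | j)
    · rw [(hΦ.1 0).1.natDegree_eq_zero.mp (hΦ.1 0).2, hαm0, eval_one, map_one, neg_neg]
    · rw [hαm, hα, neg_neg]
  have hq' : (q n : ℂ) = (1 - γ) + γ * (reproducingKernel μ Φ n ζ).eval ζ := by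
    simp only [hq, hK, hkernel, Complex.conj_mul']
    push_cast
    rfl
  have hq_pos : 0 < q n := by
    rw [hq]
    nlinarith [hK n ▸ sum_nonneg fun j _ => sq_nonneg ‖φ j ζ‖]
  rw [hαν, hΦ.addPointMass_eq hcirc hsupp hγ0.le hγ1 hζ1 hΨ n
    (hq' ▸ by exact_mod_cast hq_pos.ne'), ← hq', eval_sub, eval_smul, hkernel, hα]
  simp only [smul_eq_mul, map_sub, map_mul, map_sum, hφ _ 0, map_div₀, Complex.conj_conj,
    Complex.conj_ofReal, hΦ0, hΦζ, Complex.ofReal_div, mul_sum]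
  rw [neg_sub, sub_eq_add_neg, sub_eq_add_neg, ← sum_neg_distrib, add_comm]
  congr 1
  refine sum_congr rfl fun j _ => ?_
  ring
end
end

section
/- Let μ be a probability measure on the unit circle with infinite support, (Φ_n) its monic orthogonal polynomials, φ_n = Φ_n/‖Φ_n‖_μ its orthonormal polynomials, and α_n = -conj(Φ_{n+1}(0)) its Verblunsky coefficients. Fix 0 < γ < 1 and ζ = e^{iω} on the unit circle, and let ν = (1-γ)μ + γδ_ω. Then α_n(dν) = α_n + q_n^{-1} γ conj(φ_{n+1}(ζ)) ‖Φ_{n+1}‖_μ · Σ_{j=0}^{n} conj(φ_j(0)) φ_j(ζ), where K_n(ζ) = Σ_{j=0}^{n} |φ_j(ζ)|² and q_n = (1-γ) + γK_n(ζ). -/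
open MeasureTheory Polynomial Finset

noncomputable section

/-!
Adding the mass `γ δ_ζ` perturbs the inner product by the rank-one term
`γ conj (f ζ) g ζ`. Hence the new monic orthogonal polynomial of degree `n + 1` is `Φ_{n+1}`
minus a multiple of the Christoffel–Darboux kernel `K_n(·, ζ) = ∑_{j ≤ n} conj (φ_j ζ) φ_j`,
which reproduces `p ↦ p ζ` on polynomials of degree `≤ n`. Orthogonality in `L²(ν)` forces the
multiple to be `γ Φ_{n+1}(ζ) / q_n`, and evaluating at `0` gives the formula.
-/

open scoped ComplexConjugate

namespace Polynomial

theorem span_image_Iio_eq_degreeLT_of_monic {R : Type*} [Ring R] [Nontrivial R]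
    {Φ : ℕ → R[X]} (hΦ : ∀ k, (Φ k).Monic ∧ (Φ k).natDegree = k) (m : ℕ) :
    Submodule.span R (Φ '' Set.Iio m) = degreeLT R m :=
  Sequence.span_degreeLT ⟨Φ, fun k => by rw [degree_eq_natDegree (hΦ k).1.ne_zero, (hΦ k).2]⟩
    fun k _ => by simp [(hΦ k).1.leadingCoeff]

theorem linearMap_eq_of_degree_lt_of_monic {R M : Type*} [Ring R] [Nontrivial R]
    [AddCommGroup M] [Module R M] {Φ : ℕ → R[X]}
    (hΦ : ∀ k, (Φ k).Monic ∧ (Φ k).natDegree = k) {f g : R[X] →ₗ[R] M} {m : ℕ}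
    (hfg : ∀ k < m, f (Φ k) = g (Φ k)) {p : R[X]} (hp : p.degree < m) : f p = g p := by
  refine LinearMap.eqOn_span (s := Φ '' Set.Iio m) ?_ ?_
  · rintro _ ⟨k, hk, rfl⟩
    exact hfg k hk
  · rwa [span_image_Iio_eq_degreeLT_of_monic hΦ, mem_degreeLT]

end Polynomial

theorem mNorm_sq (μ : Measure ℂ) (f : ℂ → ℂ) : mNorm μ f ^ 2 = ∫ z, ‖f z‖ ^ 2 ∂μ :=
  Real.sq_sqrt (integral_nonneg fun _ => sq_nonneg _)

theorem mInner_self (μ : Measure ℂ) (f : ℂ → ℂ) :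
    mInner μ f f = ((mNorm μ f ^ 2 : ℝ) : ℂ) := by
  simp_rw [mInner, mNorm_sq, ← integral_complex_ofReal, Complex.conj_mul']
  push_cast
  rfl

variable {μ : Measure ℂ}

theorem mInner_add_smul_dirac {a b : ℝ} (ha : 0 ≤ a) (hb : 0 ≤ b) (ζ : ℂ) {f g : ℂ → ℂ}
    (hfg : Integrable (fun z => conj (f z) * g z) μ) :
    mInner (ENNReal.ofReal a • μ + ENNReal.ofReal b • Measure.dirac ζ) f g
      = a * mInner μ f g + b * (conj (f ζ) * g ζ) := by
  rw [mInner, integral_add_measure (hfg.smul_measure ENNReal.ofReal_ne_top)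
      ((integrable_dirac enorm_lt_top).smul_measure ENNReal.ofReal_ne_top),
    integral_smul_measure, integral_smul_measure, integral_dirac,
    ENNReal.toReal_ofReal ha, ENNReal.toReal_ofReal hb, mInner]
  simp only [Complex.real_smul]

theorem InfiniteSupport.mono_ac {ν : Measure ℂ} (hμ : InfiniteSupport μ) (hμν : μ ≪ ν) :
    InfiniteSupport ν :=
  fun t ht htν => hμ t ht (hμν htν)

theorem OnCircle.add_s8 {ν : Measure ℂ} (hμ : OnCircle μ) (hν : OnCircle ν) :
    OnCircle (μ + ν) := by
  simp_all [OnCircle]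

theorem OnCircle.smul_s8 (hμ : OnCircle μ) (c : ENNReal) : OnCircle (c • μ) := by
  simp_all [OnCircle]

theorem onCircle_dirac {ζ : ℂ} (hζ : ‖ζ‖ = 1) : OnCircle (Measure.dirac ζ) := by
  rw [OnCircle, Measure.dirac_apply' _
    (isClosed_eq continuous_norm continuous_const).measurableSet.compl]
  simp [hζ]

namespace OnCircle

variable [IsFiniteMeasure μ]

theorem integrable (hμ : OnCircle μ) {E : Type*} [NormedAddCommGroup E] {f : ℂ → E}
    (hf : Continuous f) : Integrable f μ := by
  obtain ⟨C, hC⟩ := (isCompact_sphere (0 : ℂ) 1).exists_bound_of_continuousOn hf.continuousOn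
  refine .of_bound hf.aestronglyMeasurable C ?_
  have hae : ∀ᵐ z ∂μ, ‖z‖ = 1 := hμ
  filter_upwards [hae] with z hz
  exact hC z (mem_sphere_zero_iff_norm.mpr hz)

theorem integrable_conj_eval_mul_eval_s8 (hμ : OnCircle μ) (p q : ℂ[X]) :
    Integrable (fun z => conj (p.eval z) * q.eval z) μ :=
  hμ.integrable ((Complex.continuous_conj.comp p.continuous).mul q.continuous)

/-- `hμ` makes all integrands integrable, which is what makes `mInner μ` sesquilinear on
polynomials. -/
def polyInner (hμ : OnCircle μ) : ℂ[X] →ₗ⋆[ℂ] ℂ[X] →ₗ[ℂ] ℂ :=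
  LinearMap.mk₂'ₛₗ _ _ (fun p q => mInner μ (fun z => p.eval z) (fun z => q.eval z))
    (fun p₁ p₂ q => by
      simp only [mInner, eval_add, map_add, add_mul]
      exact integral_add (hμ.integrable_conj_eval_mul_eval_s8 _ _)
        (hμ.integrable_conj_eval_mul_eval_s8 _ _))
    (fun c p q => by
      simp only [mInner, eval_smul, smul_eq_mul, map_mul, mul_assoc, integral_const_mul])
    (fun p q₁ q₂ => by
      simp only [mInner, eval_add, mul_add]
      exact integral_add (hμ.integrable_conj_eval_mul_eval_s8 _ _)
        (hμ.integrable_conj_eval_mul_eval_s8 _ _))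
    (fun c p q => by
      simp only [mInner, eval_smul, smul_eq_mul, mul_left_comm _ c, integral_const_mul,
        RingHom.id_apply])

theorem polyInner_apply (hμ : OnCircle μ) (p q : ℂ[X]) :
    hμ.polyInner p q = mInner μ (fun z => p.eval z) (fun z => q.eval z) := rfl

end OnCircle

theorem mNorm_eval_ne_zero [IsFiniteMeasure μ] (hμ : OnCircle μ) (hsupp : InfiniteSupport μ)
    {p : ℂ[X]} (hp : p ≠ 0) : mNorm μ (fun z => p.eval z) ≠ 0 := by
  intro h0
  have hint : ∫ z, ‖p.eval z‖ ^ 2 ∂μ = 0 := by rw [← mNorm_sq, h0, sq, zero_mul]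
  have hroots : ∀ᵐ z ∂μ, p.IsRoot z := by
    filter_upwards [(integral_eq_zero_iff_of_nonneg (fun _ => sq_nonneg _)
      (hμ.integrable ((continuous_norm.comp p.continuous).pow 2))).mp hint] with z hz
    simpa using hz
  refine hp (p.eq_zero_of_infinite_isRoot
    (hsupp _ (isClosed_eq p.continuous continuous_const) ?_))
  rwa [ae_iff, ← Set.compl_ofPred] at hroots

def orthonormalEval (μ : Measure ℂ) (Φ : ℕ → ℂ[X]) (j : ℕ) (z : ℂ) : ℂ :=
  (Φ j).eval z / (mNorm μ (fun w => (Φ j).eval w) : ℂ)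

/-- The kernel `K_n(z, ζ) = ∑_{j ≤ n} conj (φ_j ζ) φ_j z` as a polynomial in `z`. -/
def christoffelDarbouxKernel (μ : Measure ℂ) (Φ : ℕ → ℂ[X]) (n : ℕ) (ζ : ℂ) : ℂ[X] :=
  ∑ j ∈ range (n + 1),
    (conj (orthonormalEval μ Φ j ζ) / (mNorm μ (fun w => (Φ j).eval w) : ℂ)) • Φ j

section ChristoffelDarbouxKernel

variable (μ : Measure ℂ) (Φ : ℕ → ℂ[X]) (n : ℕ) (ζ : ℂ)

theorem eval_christoffelDarbouxKernel (z : ℂ) :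
    (christoffelDarbouxKernel μ Φ n ζ).eval z
      = ∑ j ∈ range (n + 1), conj (orthonormalEval μ Φ j ζ) * orthonormalEval μ Φ j z := by
  simp only [christoffelDarbouxKernel, eval_finsetSum, eval_smul, smul_eq_mul, orthonormalEval]
  exact sum_congr rfl fun j _ => by ring

theorem eval_christoffelDarbouxKernel_self :
    (christoffelDarbouxKernel μ Φ n ζ).eval ζ
      = ((∑ j ∈ range (n + 1), ‖orthonormalEval μ Φ j ζ‖ ^ 2 : ℝ) : ℂ) := by
  simp [eval_christoffelDarbouxKernel, Complex.conj_mul']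

theorem conj_eval_christoffelDarbouxKernel (z : ℂ) :
    conj ((christoffelDarbouxKernel μ Φ n ζ).eval z)
      = ∑ j ∈ range (n + 1), conj (orthonormalEval μ Φ j z) * orthonormalEval μ Φ j ζ := by
  simp only [eval_christoffelDarbouxKernel, map_sum, map_mul, Complex.conj_conj, mul_comm]

end ChristoffelDarbouxKernel

namespace IsMonicOPS

variable {Φ : ℕ → ℂ[X]}

theorem christoffelDarbouxKernel_mem_degreeLT (hΦ : IsMonicOPS μ Φ) (n : ℕ) (ζ : ℂ) :
    christoffelDarbouxKernel μ Φ n ζ ∈ degreeLT ℂ (n + 1) := by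
  refine Submodule.sum_mem _ fun j hj => Submodule.smul_mem _ _ ?_
  rw [mem_degreeLT, degree_eq_natDegree (hΦ.1 j).1.ne_zero, (hΦ.1 j).2]
  exact_mod_cast mem_range.mp hj

variable [IsFiniteMeasure μ] (hμ : OnCircle μ)

theorem polyInner_eq_zero_of_degree_lt (hΦ : IsMonicOPS μ Φ) {m : ℕ} {p : ℂ[X]}
    (hp : p.degree < m) : hμ.polyInner (Φ m) p = 0 :=
  linearMap_eq_of_degree_lt_of_monic (f := hμ.polyInner (Φ m)) (g := 0) hΦ.1
    (fun k hk => hΦ.2 m k hk.ne') hp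

theorem polyInner_christoffelDarbouxKernel (hsupp : InfiniteSupport μ) (hΦ : IsMonicOPS μ Φ)
    (n : ℕ) (ζ : ℂ) {p : ℂ[X]} (hp : p.degree < ↑(n + 1)) :
    hμ.polyInner (christoffelDarbouxKernel μ Φ n ζ) p = p.eval ζ := by
  refine linearMap_eq_of_degree_lt_of_monic
    (f := hμ.polyInner (christoffelDarbouxKernel μ Φ n ζ)) (g := leval ζ) hΦ.1
    (fun k hk => ?_) hp
  have hN : (mNorm μ (fun w => (Φ k).eval w) : ℂ) ≠ 0 := by
    exact_mod_cast mNorm_eval_ne_zero hμ hsupp (hΦ.1 k).1.ne_zero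
  rw [christoffelDarbouxKernel, map_sum, LinearMap.sum_apply,
    Finset.sum_eq_single_of_mem k (mem_range.mpr hk) fun j _ hjk => by
      rw [map_smulₛₗ, LinearMap.smul_apply, OnCircle.polyInner_apply, hΦ.2 j k hjk, smul_zero],
    map_smulₛₗ, LinearMap.smul_apply, OnCircle.polyInner_apply, mInner_self]
  simp only [orthonormalEval, map_div₀, Complex.conj_conj, Complex.conj_ofReal, smul_eq_mul,
    leval_apply]
  push_cast
  field_simp

theorem eq_of_forall_polyInner_eq_zero_s8 (hsupp : InfiniteSupport μ) (hΦ : IsMonicOPS μ Φ)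
    {m : ℕ} {P : ℂ[X]} (hP : P.Monic) (hPdeg : P.natDegree = m)
    (hPorth : ∀ p : ℂ[X], p.degree < m → hμ.polyInner P p = 0) : Φ m = P := by
  by_contra hne
  obtain ⟨hmonic, hnat⟩ := hΦ.1 m
  have hdeg : (Φ m - P).degree < m := by
    have h := degree_sub_lt_left (p := Φ m) (q := P)
      (by rw [degree_eq_natDegree hmonic.ne_zero, degree_eq_natDegree hP.ne_zero, hnat, hPdeg])
      hmonic.ne_zero (by rw [hmonic.leadingCoeff, hP.leadingCoeff])
    rwa [degree_eq_natDegree hmonic.ne_zero, hnat] at h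
  have hself : hμ.polyInner (Φ m - P) (Φ m - P) = 0 := by
    rw [map_sub hμ.polyInner, LinearMap.sub_apply, polyInner_eq_zero_of_degree_lt hμ hΦ hdeg,
      hPorth _ hdeg, sub_zero]
  rw [OnCircle.polyInner_apply, mInner_self] at hself
  exact mNorm_eval_ne_zero hμ hsupp (sub_ne_zero.mpr hne)
    (pow_eq_zero_iff two_ne_zero |>.mp (by exact_mod_cast hself))

end IsMonicOPS

theorem IsMonicOPS.eq_sub_smul_christoffelDarbouxKernel [IsFiniteMeasure μ] (hμ : OnCircle μ)
    (hsupp : InfiniteSupport μ) {Φ Ψ : ℕ → ℂ[X]} (hΦ : IsMonicOPS μ Φ) {γ : ℝ} (hγ0 : 0 ≤ γ)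
    (hγ1 : γ < 1) {ζ : ℂ} (hζ : ‖ζ‖ = 1)
    (hΨ : IsMonicOPS (ENNReal.ofReal (1 - γ) • μ + ENNReal.ofReal γ • Measure.dirac ζ) Ψ)
    (n : ℕ) :
    Ψ (n + 1) = Φ (n + 1) - ((γ : ℂ) * (Φ (n + 1)).eval ζ /
      (((1 - γ) + γ * ∑ j ∈ range (n + 1), ‖orthonormalEval μ Φ j ζ‖ ^ 2 : ℝ) : ℂ)) •
        christoffelDarbouxKernel μ Φ n ζ := by
  set ν := ENNReal.ofReal (1 - γ) • μ + ENNReal.ofReal γ • Measure.dirac ζ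
  set k := ∑ j ∈ range (n + 1), ‖orthonormalEval μ Φ j ζ‖ ^ 2 with hk
  set c : ℂ := γ * (Φ (n + 1)).eval ζ / ((1 - γ + γ * k : ℝ) : ℂ)
  have hq : ((1 - γ + γ * k : ℝ) : ℂ) ≠ 0 := by
    have : 0 ≤ k := sum_nonneg fun j _ => sq_nonneg _
    exact_mod_cast (by nlinarith : 0 < 1 - γ + γ * k).ne'
  have : IsFiniteMeasure (ENNReal.ofReal (1 - γ) • μ) := μ.smul_finite ENNReal.ofReal_ne_top
  have : IsFiniteMeasure (ENNReal.ofReal γ • Measure.dirac ζ) :=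
    (Measure.dirac ζ).smul_finite ENNReal.ofReal_ne_top
  have hν : OnCircle ν := (hμ.smul_s8 _).add_s8 ((onCircle_dirac hζ).smul_s8 _)
  have hνsupp : InfiniteSupport ν := hsupp.mono_ac
    ((Measure.absolutelyContinuous_smul (by simpa using hγ1)).add_right _)
  obtain ⟨hmonic, hnat⟩ := hΦ.1 (n + 1)
  have hdeg : (c • christoffelDarbouxKernel μ Φ n ζ).degree < (Φ (n + 1)).degree := by
    rw [degree_eq_natDegree hmonic.ne_zero, hnat]
    exact (degree_smul_le _ _).trans_lt
      (mem_degreeLT.mp (hΦ.christoffelDarbouxKernel_mem_degreeLT n ζ))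
  refine hΨ.eq_of_forall_polyInner_eq_zero_s8 hν hνsupp (hmonic.sub_of_left hdeg)
    (by rw [natDegree_eq_of_degree_eq (degree_sub_eq_left_of_degree_lt hdeg), hnat])
    fun p hp => ?_
  rw [hν.polyInner_apply, mInner_add_smul_dirac (sub_nonneg.2 hγ1.le) hγ0 ζ
      (hμ.integrable_conj_eval_mul_eval_s8 _ _), ← hμ.polyInner_apply, map_sub hμ.polyInner,
    map_smulₛₗ, LinearMap.sub_apply, LinearMap.smul_apply,
    hΦ.polyInner_eq_zero_of_degree_lt hμ hp, hΦ.polyInner_christoffelDarbouxKernel hμ hsupp n ζ hp,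
    eval_sub, eval_smul, eval_christoffelDarbouxKernel_self, ← hk]
  -- the goal now reads `conj (γ Φ_{n+1}(ζ) - c q_n) * p ζ = 0`, up to rearrangement
  have hc : conj c * ((1 - γ + γ * k : ℝ) : ℂ) = γ * conj ((Φ (n + 1)).eval ζ) := by
    simp only [c, map_div₀, map_mul, Complex.conj_ofReal]
    field_simp
  simp only [smul_eq_mul, map_sub, map_mul, Complex.conj_ofReal]
  push_cast at hc ⊢
  linear_combination (-p.eval ζ) * hc

/-- Formula (2.25)/(3.1):
`α_n(dν) = α_n + q_n⁻¹ γ conj(φ_{n+1}(ζ)) ‖Φ_{n+1}‖ Σ_{j=0}^n conj(φ_j(0)) φ_j(ζ)`. -/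
theorem verblunsky_insert_point_mass_kernel_form
    (μ : Measure ℂ) [IsProbabilityMeasure μ] (hcirc : OnCircle μ)
    (hsupp : InfiniteSupport μ)
    (Φ : ℕ → Polynomial ℂ) (hΦ : IsMonicOPS μ Φ)
    (φ : ℕ → ℂ → ℂ)
    (hφ : ∀ m z, φ m z = (Φ m).eval z / (mNorm μ (fun w => (Φ m).eval w) : ℂ))
    (α : ℕ → ℂ) (hα : ∀ n, α n = -(starRingEnd ℂ) ((Φ (n + 1)).eval 0))
    (γ : ℝ) (hγ0 : 0 < γ) (hγ1 : γ < 1)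
    (ω : ℝ) (ζ : ℂ) (hζ : ζ = Complex.exp (ω * Complex.I))
    (ν : Measure ℂ)
    (hν : ν = ENNReal.ofReal (1 - γ) • μ + ENNReal.ofReal γ • Measure.dirac ζ)
    (Ψ : ℕ → Polynomial ℂ) (hΨ : IsMonicOPS ν Ψ)
    (αν : ℕ → ℂ) (hαν : ∀ n, αν n = -(starRingEnd ℂ) ((Ψ (n + 1)).eval 0))
    (K : ℕ → ℝ) (hK : ∀ n, K n = ∑ j ∈ Finset.range (n + 1), ‖φ j ζ‖ ^ 2)
    (q : ℕ → ℝ) (hq : ∀ n, q n = (1 - γ) + γ * K n)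
    (n : ℕ) :
    αν n = α n + ((q n : ℝ) : ℂ)⁻¹ * (γ : ℂ) * (starRingEnd ℂ) (φ (n + 1) ζ) *
        ((mNorm μ (fun w => (Φ (n + 1)).eval w) : ℝ) : ℂ) *
        ∑ j ∈ Finset.range (n + 1), (starRingEnd ℂ) (φ j 0) * φ j ζ := by
  obtain rfl : φ = orthonormalEval μ Φ := funext fun m => funext (hφ m)
  have hζ1 : ‖ζ‖ = 1 := by rw [hζ, Complex.norm_exp_ofReal_mul_I]
  have hN : (mNorm μ (fun w => (Φ (n + 1)).eval w) : ℂ) ≠ 0 := by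
    exact_mod_cast mNorm_eval_ne_zero hcirc hsupp (hΦ.1 (n + 1)).1.ne_zero
  subst hν
  rw [hαν, hα, hq, hK,
    hΦ.eq_sub_smul_christoffelDarbouxKernel hcirc hsupp hγ0.le hγ1 hζ1 hΨ, eval_sub, eval_smul,
    smul_eq_mul, map_sub, map_mul, conj_eval_christoffelDarbouxKernel, hφ (n + 1) ζ]
  simp only [map_div₀, map_mul, Complex.conj_ofReal]
  field_simp
  ring
end
end
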